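/- arXiv:2510.12952 — 4 statements merged into one kernel-verified Lean document; each statement's English description precedes it below -/
import Mathlib

section
/- Let n ≥ 1, C₀ > 0, k ≥ 1, and set q = C₀·(2^n - 1). Suppose C and Q ≥ 0 satisfy C - k·q < C₀, C - Q > 0, and Q ≤ (k-1)·q. Then (C - k·q)/(C - Q) ≤ (C - k·q)/(C - k·q + C₀·(2^n - 1)) < 1/2^n. -/
open Real

theorem div_add_mul_sub_one_lt_one_div {K : Type*} [Field K] [LinearOrder K]
    [IsStrictOrderedRing K] {x c a : K} (hx : 0 < x) (hxc : x < c) (ha : 1 < a) :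
    x / (x + c * (a - 1)) < 1 / a := by
  have ha' : 0 < a - 1 := sub_pos.2 ha
  have hden : 0 < x + c * (a - 1) := by
    have : 0 < c * (a - 1) := mul_pos (hx.trans hxc) ha'
    linarith
  rw [div_lt_div_iff₀ hden (by linarith)]
  have : x * (a - 1) < c * (a - 1) := mul_lt_mul_of_pos_right hxc ha'
  linarith

theorem stmt_4_general (n k : ℕ) (hn : 1 ≤ n) (C₀ : ℝ)
    (q : ℝ) (hq : q = C₀ * (2 ^ n - 1))
    (C Q : ℝ)
    (hCk : 0 < C - k * q) (hCk' : C - k * q < C₀)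
    (hQ : Q ≤ ((k : ℝ) - 1) * q) :
    (C - k * q) / (C - Q) ≤ (C - k * q) / (C - k * q + C₀ * (2 ^ n - 1)) ∧
    (C - k * q) / (C - k * q + C₀ * (2 ^ n - 1)) < 1 / 2 ^ n := by
  have h2n : (1 : ℝ) < 2 ^ n := one_lt_pow₀ one_lt_two (by omega)
  have hgap : 0 < C₀ * (2 ^ n - 1) := mul_pos (hCk.trans hCk') (sub_pos.2 h2n)
  refine ⟨div_le_div_of_nonneg_left hCk.le (by linarith) ?_,
    div_add_mul_sub_one_lt_one_div hCk hCk' h2n⟩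
  rw [← hq]
  linarith

theorem stmt_4 (n k : ℕ) (hn : 1 ≤ n) (hk : 1 ≤ k) (C₀ : ℝ) (hC₀ : 0 < C₀)
    (q : ℝ) (hq : q = C₀ * (2 ^ n - 1))
    (C Q : ℝ) (hQ0 : 0 ≤ Q)
    (hCk : 0 < C - k * q) (hCk' : C - k * q < C₀)
    (hCQ : 0 < C - Q) (hQ : Q ≤ ((k : ℝ) - 1) * q) :
    (C - k * q) / (C - Q) ≤ (C - k * q) / (C - k * q + C₀ * (2 ^ n - 1)) ∧
    (C - k * q) / (C - k * q + C₀ * (2 ^ n - 1)) < 1 / 2 ^ n :=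
  stmt_4_general n k hn C₀ q hq C Q hCk hCk' hQ
end

section
/- Under the hypotheses of the reduction — C the CLUM cost after trades, M a nonempty finite set of 'satisfying' outcomes each with payout exactly k·q, and S the remaining outcomes with |S| ≤ 2^n, payouts Q_i ∈ [0,(k-1)·q], q = C₀(2^n−1), 0 < C − k·q < C₀ — the reciprocal price 1/p_ω = |M| + Σ_{i∈S}(C − kq)/(C − Q_i) satisfies ⌊1/p_ω⌋ = |M|. -/
/-!
Since `Q i ≤ (k - 1) q`, every residual term `(C - k q) / (C - Q i)` is at most `t / (t + q)` with
`t = C - k q`. There are at most `2 ^ n` of them, and `2 ^ n t < t + C₀ (2 ^ n - 1)` is exactly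
`t < C₀`, so the residual sum lies in `[0, 1)` and does not move the floor off `|M|`.
-/

open Real Finset

theorem Int.floor_natCast_add_of_nonneg_of_lt_one {R : Type*} [Ring R] [LinearOrder R]
    [IsStrictOrderedRing R] [FloorRing R] (m : ℕ) {x : R} (h₀ : 0 ≤ x) (h₁ : x < 1) :
    ⌊(m : R) + x⌋ = m := by
  rw [Int.floor_natCast_add, Int.floor_eq_zero_iff.mpr ⟨h₀, h₁⟩, add_zero]

theorem Finset.sum_div_le_card_mul_div {ι : Type*} (S : Finset ι) (D : ι → ℝ) {t s : ℝ}
    (ht : 0 ≤ t) (hs : 0 < s) (hD : ∀ i ∈ S, s ≤ D i) :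
    ∑ i ∈ S, t / D i ≤ S.card * (t / s) :=
  (S.sum_le_card_nsmul _ _ fun i hi => div_le_div_of_nonneg_left ht hs (hD i hi)).trans_eq
    (nsmul_eq_mul _ _)

theorem mul_div_add_mul_sub_one_lt_one {N t C₀ : ℝ} (hN : 1 < N) (ht : 0 ≤ t) (htC₀ : t < C₀) :
    N * (t / (t + C₀ * (N - 1))) < 1 := by
  have hden : 0 < t + C₀ * (N - 1) := by nlinarith
  rw [mul_div_assoc', div_lt_one hden]
  nlinarith

theorem stmt_6_general {α ι : Type*} (n k : ℕ) (hn : 1 ≤ n)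
    (C₀ : ℝ) (hC₀ : 0 < C₀) (q : ℝ) (hq : q = C₀ * (2 ^ n - 1))
    (C : ℝ) (hCk : 0 < C - k * q) (hCk' : C - k * q < C₀)
    (M : Finset α)
    (S : Finset ι) (hS : S.card ≤ 2 ^ n)
    (Q : ι → ℝ) (hQ : ∀ i ∈ S, 0 ≤ Q i ∧ Q i ≤ ((k : ℝ) - 1) * q) :
    ⌊(M.card : ℝ) + ∑ i ∈ S, (C - k * q) / (C - Q i)⌋ = (M.card : ℤ) := by
  have h2n : (1 : ℝ) < 2 ^ n := one_lt_pow₀ one_lt_two (by omega)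
  have hq₀ : 0 < q := by rw [hq]; nlinarith
  have hden : ∀ i ∈ S, C - k * q + q ≤ C - Q i := fun i hi => by linarith [(hQ i hi).2]
  have hsum_nonneg : 0 ≤ ∑ i ∈ S, (C - k * q) / (C - Q i) :=
    sum_nonneg fun i hi => div_nonneg hCk.le (by linarith [hden i hi])
  refine Int.floor_natCast_add_of_nonneg_of_lt_one _ hsum_nonneg ?_
  calc ∑ i ∈ S, (C - k * q) / (C - Q i)
      ≤ S.card * ((C - k * q) / (C - k * q + q)) :=
        S.sum_div_le_card_mul_div (C - Q ·) hCk.le (by linarith) hden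
    _ ≤ 2 ^ n * ((C - k * q) / (C - k * q + q)) := by
        gcongr
        exact_mod_cast hS
    _ < 1 := by
        have := mul_div_add_mul_sub_one_lt_one h2n hCk.le hCk'
        rwa [← hq] at this

theorem stmt_6 {α ι : Type*} (n k : ℕ) (hn : 1 ≤ n) (hk : 1 ≤ k)
    (C₀ : ℝ) (hC₀ : 0 < C₀) (q : ℝ) (hq : q = C₀ * (2 ^ n - 1))
    (C : ℝ) (hCk : 0 < C - k * q) (hCk' : C - k * q < C₀)
    (M : Finset α) (hM : M.Nonempty)
    (S : Finset ι) (hS : S.card ≤ 2 ^ n)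
    (Q : ι → ℝ) (hQ : ∀ i ∈ S, 0 ≤ Q i ∧ Q i ≤ ((k : ℝ) - 1) * q)
    (hCQ : ∀ i ∈ S, 0 < C - Q i) :
    ⌊(M.card : ℝ) + ∑ i ∈ S, (C - k * q) / (C - Q i)⌋ = (M.card : ℤ) :=
  stmt_6_general n k hn C₀ hC₀ q hq C hCk hCk' M S hS Q hQ
end

section
/- Let n ≥ 1 and let b : {0,…,n} → ℝ be nonincreasing with b i ≥ 0. For c ≥ 2 define L' = b 0 + Σ_{i=0}^{n-1} b(min(i+c+1, n))·2^i and U' = b 0 + Σ_{i=0}^{n-1} b(max(i,0))·2^i = b 0 + Σ_{i=0}^{n-1} b(i)·2^i. Then U' ≤ 2^{c+1} · L'. -/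
open Real Finset

theorem stmt_13 (n c : ℕ) (hn : 1 ≤ n) (hc : 2 ≤ c) (b : ℕ → ℝ)
    (hmono : ∀ i j, i ≤ j → j ≤ n → b j ≤ b i)
    (hnonneg : ∀ i, i ≤ n → 0 ≤ b i) :
    b 0 + ∑ i ∈ Finset.range n, b i * 2 ^ i ≤
      2 ^ (c + 1) * (b 0 + ∑ i ∈ Finset.range n, b (min (i + c + 1) n) * 2 ^ i) := by
  set S := ∑ i ∈ Finset.range n, b (min (i + c + 1) n) * 2 ^ i with hS
  have hb0 : 0 ≤ b 0 := hnonneg 0 (by omega)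
  have hSnn : 0 ≤ S := by
    apply Finset.sum_nonneg
    intro i hi
    exact mul_nonneg (hnonneg _ (by omega)) (by positivity)
  have geom : ∀ m : ℕ, ∑ i ∈ Finset.range m, (2:ℝ)^i = 2^m - 1 := by
    intro m
    induction m with
    | zero => simp
    | succ k ih => rw [Finset.sum_range_succ, ih]; ring
  have key : ∑ i ∈ Finset.range n, b i * 2 ^ i ≤ (2^(c+1)-1) * b 0 + 2^(c+1) * S := by
    rcases le_or_gt n (c+1) with h | h
    · have h1 : ∑ i ∈ Finset.range n, b i * 2^i ≤ ∑ i ∈ Finset.range n, b 0 * 2^i := by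
        apply Finset.sum_le_sum
        intro i hi
        have := hmono 0 i (Nat.zero_le i) (by simp at hi; omega)
        have : b i ≤ b 0 := this
        nlinarith [pow_pos (by norm_num : (0:ℝ) < 2) i]
      have h2 : ∑ i ∈ Finset.range n, b 0 * 2^i = b 0 * (2^n - 1) := by
        rw [← Finset.mul_sum, geom]
      have h3 : (2:ℝ)^n ≤ 2^(c+1) := by
        apply pow_le_pow_right₀ (by norm_num) h
      nlinarith [mul_nonneg (pow_nonneg (by norm_num : (0:ℝ) ≤ 2) (c+1)) hSnn]
    · have hsplit : ∑ i ∈ Finset.range n, b i * 2^i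
          = ∑ i ∈ Finset.range (c+1), b i * 2^i + ∑ i ∈ Finset.Ico (c+1) n, b i * 2^i := by
        rw [Finset.range_eq_Ico, Finset.range_eq_Ico,
          Finset.sum_Ico_consecutive _ (Nat.zero_le _) (le_of_lt h)]
      have hlow : ∑ i ∈ Finset.range (c+1), b i * 2^i ≤ (2^(c+1)-1) * b 0 := by
        have h1 : ∑ i ∈ Finset.range (c+1), b i * 2^i ≤ ∑ i ∈ Finset.range (c+1), b 0 * 2^i := by
          apply Finset.sum_le_sum
          intro i hi
          have : b i ≤ b 0 := hmono 0 i (Nat.zero_le i) (by simp at hi; omega)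
          nlinarith [pow_pos (by norm_num : (0:ℝ) < 2) i]
        rw [← Finset.mul_sum, geom] at h1
        linarith
      have hhigh : ∑ i ∈ Finset.Ico (c+1) n, b i * 2^i ≤ 2^(c+1) * S := by
        rw [Finset.sum_Ico_eq_sum_range]
        have heq : ∀ i ∈ Finset.range (n - (c+1)), b (c+1+i) * 2^(c+1+i)
            = 2^(c+1) * (b (min (i + c + 1) n) * 2^i) := by
          intro i hi
          simp only [Finset.mem_range] at hi
          have : min (i + c + 1) n = c + 1 + i := by omega
          rw [this, pow_add]
          ring
        rw [Finset.sum_congr rfl heq, ← Finset.mul_sum]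
        apply mul_le_mul_of_nonneg_left _ (by positivity)
        apply Finset.sum_le_sum_of_subset_of_nonneg
        · apply Finset.range_subset_range.2; omega
        · intro i _ _
          exact mul_nonneg (hnonneg _ (by omega)) (by positivity)
      linarith [hsplit, hlow, hhigh]
  have : (2:ℝ)^(c+1) * (b 0 + S) = (2^(c+1)-1) * b 0 + 2^(c+1) * S + b 0 := by ring
  linarith
end

section
/- Let φ' : (0,∞) → (0,∞) be strictly decreasing with (φ')⁻¹(x·y) = (φ')⁻¹(x)·(φ')⁻¹(y), and suppose (φ')⁻¹(1/2^n) > 1 for some n ≥ 1. Let C₀ > 0, k ≥ 1, and q = C₀·((φ')⁻¹(1/2^n) − 1). If C satisfies 0 < C − k·q < C₀, then φ'((C − (k−1)·q)/(C − k·q)) < 1/2^n. -/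
/-! The ratio is `1 + q / (C - k q) > 1 + q / C₀ = g (1 / 2 ^ n)`, and the strictly decreasing
`f`, which inverts `g`, turns this into `f (ratio) < f (g (1 / 2 ^ n)) = 1 / 2 ^ n`. -/

lemma lt_add_mul_sub_one_div {a c d : ℝ} (ha : 1 < a) (hd : 0 < d) (hdc : d < c) :
    a < (d + c * (a - 1)) / d := by
  rw [lt_div_iff₀ hd]
  nlinarith [mul_lt_mul_of_pos_right hdc (sub_pos.mpr ha)]

lemma StrictAntiOn.lt_of_rightInverse_lt {f g : ℝ → ℝ} (hf : StrictAntiOn f (Set.Ioi 0))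
    {x y : ℝ} (hfg : f (g y) = y) (hgy : 0 < g y) (hx : g y < x) : f x < y :=
  hfg ▸ hf hgy (hgy.trans hx) hx

theorem stmt_19_general (f g : ℝ → ℝ)
    (hf : StrictAntiOn f (Set.Ioi 0))
    (hfg : ∀ x > 0, f (g x) = x)
    (n k : ℕ)
    (hg1 : 1 < g (1 / 2 ^ n))
    (C₀ : ℝ)
    (q : ℝ) (hq : q = C₀ * (g (1 / 2 ^ n) - 1))
    (C : ℝ) (hCk : 0 < C - k * q) (hCk' : C - k * q < C₀) :
    f ((C - ((k : ℝ) - 1) * q) / (C - k * q)) < 1 / 2 ^ n := by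
  have hratio : C - ((k : ℝ) - 1) * q = (C - k * q) + C₀ * (g (1 / 2 ^ n) - 1) := by
    rw [← hq]; ring
  refine hf.lt_of_rightInverse_lt (hfg _ (by positivity)) (by linarith) ?_
  rw [hratio]
  exact lt_add_mul_sub_one_div hg1 hCk hCk'

theorem stmt_19 (f g : ℝ → ℝ)
    (hf : StrictAntiOn f (Set.Ioi 0))
    (hfpos : ∀ x > 0, 0 < f x)
    (hgpos : ∀ x > 0, 0 < g x)
    (hgf : ∀ x > 0, g (f x) = x)
    (hfg : ∀ x > 0, f (g x) = x)
    (hmul : ∀ x > 0, ∀ y > 0, g (x * y) = g x * g y)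
    (n k : ℕ) (hn : 1 ≤ n) (hk : 1 ≤ k)
    (hg1 : 1 < g (1 / 2 ^ n))
    (C₀ : ℝ) (hC₀ : 0 < C₀)
    (q : ℝ) (hq : q = C₀ * (g (1 / 2 ^ n) - 1))
    (C : ℝ) (hCk : 0 < C - k * q) (hCk' : C - k * q < C₀) :
    f ((C - ((k : ℝ) - 1) * q) / (C - k * q)) < 1 / 2 ^ n :=
  stmt_19_general f g hf hfg n k hg1 C₀ q hq C hCk hCk'
end
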